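/- The three-dimensional Lebesgue measure of the set {(x, y, z) ∈ ℝ³ : 0 < z < y < x < 1 and z·(x + y) > x·y} equals (2·ln 2 − 1)/6; equivalently, multiplying by 3! = 6, the probability that all 3 species coexist in an invader-driven replicator system whose 3 invasion fitnesses are i.i.d. uniform on [0,1] equals 2·ln 2 − 1. -/

import Mathlib

open MeasureTheory Real Set

lemma measS : MeasurableSet {p : ℝ × ℝ × ℝ |
    0 < p.2.2 ∧ p.2.2 < p.2.1 ∧ p.2.1 < p.1 ∧ p.1 < 1 ∧
    p.2.2 * (p.1 + p.2.1) > p.1 * p.2.1} := by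
  simp only [gt_iff_lt, Set.setOf_and]
  repeat' apply MeasurableSet.inter
  all_goals exact measurableSet_lt (by fun_prop) (by fun_prop)

lemma slice_z (x y : ℝ) :
    {z : ℝ | 0 < z ∧ z < y ∧ y < x ∧ x < 1 ∧ z * (x + y) > x * y} =
      if 0 < y ∧ y < x ∧ x < 1 then Ioo (x*y/(x+y)) y else ∅ := by
  split_ifs with h
  · obtain ⟨hy, hyx, hx1⟩ := h
    have hx : 0 < x := hy.trans hyx
    have hxy : 0 < x + y := by linarith
    ext z
    simp only [mem_setOf_eq, mem_Ioo]
    constructor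
    · rintro ⟨_, h2, _, _, h5⟩
      exact ⟨(div_lt_iff₀ hxy).2 (by linarith), h2⟩
    · rintro ⟨h1, h2⟩
      have h0 : (0:ℝ) < x*y/(x+y) := div_pos (by positivity) hxy
      exact ⟨h0.trans h1, h2, hyx, hx1, by nlinarith [(div_lt_iff₀ hxy).1 h1]⟩
  · ext z
    simp only [mem_setOf_eq, mem_empty_iff_false, iff_false, not_and]
    intro h1 h2 h3 h4
    exact absurd ⟨h1.trans h2, h3, h4⟩ h

lemma inner_int {x : ℝ} (hx : 0 < x) :
    ∫ y in Ioo (0:ℝ) x, (y - x*y/(x+y)) = x^2 * Real.log 2 - x^2/2 := by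
  rw [← integral_Ioc_eq_integral_Ioo, ← intervalIntegral.integral_of_le hx.le]
  have hd : ∀ y ∈ Set.uIcc (0:ℝ) x,
      HasDerivAt (fun t => t^2/2 - x*t + x^2 * Real.log (x+t)) (y - x*y/(x+y)) y := by
    intro y hy
    rw [Set.uIcc_of_le hx.le] at hy
    have hxy : 0 < x + y := by linarith [hy.1]
    have hlog : HasDerivAt (fun t : ℝ => Real.log (x+t)) ((x+y)⁻¹) y := by
      have h1 : HasDerivAt (fun t : ℝ => x + t) 1 y := by
        simpa using (hasDerivAt_id y).const_add x
      simpa [Function.comp_def] using (Real.hasDerivAt_log hxy.ne').comp y h1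
    have h2 : HasDerivAt (fun t : ℝ => t^2/2 - x*t + x^2 * Real.log (x+t))
        (y - x + x^2 * (x+y)⁻¹) y := by
      have ha : HasDerivAt (fun t : ℝ => t^2/2) y y := by
        simpa using (hasDerivAt_pow 2 y).div_const 2
      have hb : HasDerivAt (fun t : ℝ => x*t) x y := by
        simpa using (hasDerivAt_id y).const_mul x
      exact (ha.sub hb).add (hlog.const_mul (x^2))
    convert h2 using 1
    field_simp
    ring
  have hint : IntervalIntegrable (fun y => y - x*y/(x+y)) volume 0 x := by
    apply ContinuousOn.intervalIntegrable
    apply ContinuousOn.sub continuousOn_id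
    apply ContinuousOn.div ((continuous_const.mul continuous_id).continuousOn)
      ((continuous_const.add continuous_id).continuousOn)
    intro y hy
    rw [Set.uIcc_of_le hx.le] at hy
    have : 0 < x + y := by linarith [hy.1]
    simpa using this.ne'
  rw [intervalIntegral.integral_eq_sub_of_hasDerivAt hd hint]
  have hxx : x + x = 2 * x := by ring
  rw [hxx, Real.log_mul two_ne_zero hx.ne']
  simp
  ring

/-- The Lebesgue measure of
`{(x,y,z) : 0 < z < y < x < 1, z(x+y) > xy}` is `(2 ln 2 - 1)/6`; multiplying by `3! = 6`,
the probability that all 3 of 3 i.i.d. uniform-[0,1]-fitness species coexist in the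
invader-driven replicator equals `2 ln 2 - 1`. -/
theorem stmt_13 :
    MeasureTheory.volume {p : ℝ × ℝ × ℝ |
        0 < p.2.2 ∧ p.2.2 < p.2.1 ∧ p.2.1 < p.1 ∧ p.1 < 1 ∧
        p.2.2 * (p.1 + p.2.1) > p.1 * p.2.1} =
      ENNReal.ofReal ((2 * Real.log 2 - 1) / 6) := by
  have hS := measS
  rw [show (volume : Measure (ℝ × ℝ × ℝ)) = (volume : Measure ℝ).prod volume from rfl,
    Measure.prod_apply hS]
  have hlog2 : (1:ℝ)/2 < Real.log 2 := by
    have := Real.log_two_gt_d9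
    linarith
  have hslice : ∀ x : ℝ, volume (Prod.mk x ⁻¹' {p : ℝ × ℝ × ℝ |
        0 < p.2.2 ∧ p.2.2 < p.2.1 ∧ p.2.1 < p.1 ∧ p.1 < 1 ∧
        p.2.2 * (p.1 + p.2.1) > p.1 * p.2.1}) =
      (Ioo (0:ℝ) 1).indicator (fun x => ENNReal.ofReal (x^2 * Real.log 2 - x^2/2)) x := by
    intro x
    have hSx : MeasurableSet (Prod.mk x ⁻¹' {p : ℝ × ℝ × ℝ |
        0 < p.2.2 ∧ p.2.2 < p.2.1 ∧ p.2.1 < p.1 ∧ p.1 < 1 ∧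
        p.2.2 * (p.1 + p.2.1) > p.1 * p.2.1}) := hS.preimage measurable_prodMk_left
    rw [show (volume : Measure (ℝ × ℝ)) = (volume : Measure ℝ).prod volume from rfl,
      Measure.prod_apply hSx]
    have hzset : ∀ y : ℝ, (Prod.mk y ⁻¹' (Prod.mk x ⁻¹' {p : ℝ × ℝ × ℝ |
        0 < p.2.2 ∧ p.2.2 < p.2.1 ∧ p.2.1 < p.1 ∧ p.1 < 1 ∧
        p.2.2 * (p.1 + p.2.1) > p.1 * p.2.1})) =
        if 0 < y ∧ y < x ∧ x < 1 then Ioo (x*y/(x+y)) y else ∅ := by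
      intro y
      rw [← slice_z x y]
      rfl
    by_cases hx : x ∈ Ioo (0:ℝ) 1
    · obtain ⟨hx0, hx1⟩ := hx
      have key : ∀ y : ℝ, volume (Prod.mk y ⁻¹' (Prod.mk x ⁻¹' {p : ℝ × ℝ × ℝ |
          0 < p.2.2 ∧ p.2.2 < p.2.1 ∧ p.2.1 < p.1 ∧ p.1 < 1 ∧
          p.2.2 * (p.1 + p.2.1) > p.1 * p.2.1})) =
          (Ioo (0:ℝ) x).indicator (fun y => ENNReal.ofReal (y - x*y/(x+y))) y := by
        intro y
        rw [hzset y]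
        by_cases hy : y ∈ Ioo (0:ℝ) x
        · rw [if_pos ⟨hy.1, hy.2, hx1⟩, indicator_of_mem hy, Real.volume_Ioo]
        · rw [if_neg (by rintro ⟨h1, h2, _⟩; exact hy ⟨h1, h2⟩), indicator_of_notMem hy]
          simp
      rw [lintegral_congr key, lintegral_indicator measurableSet_Ioo]
      have hcont : ContinuousOn (fun y : ℝ => y - x*y/(x+y)) (Icc 0 x) := by
        apply ContinuousOn.sub continuousOn_id
        apply ContinuousOn.div ((continuous_const.mul continuous_id).continuousOn)
          ((continuous_const.add continuous_id).continuousOn)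
        intro y hy
        have : 0 < x + y := by linarith [hy.1]
        simpa using this.ne'
      have hintg : IntegrableOn (fun y : ℝ => y - x*y/(x+y)) (Ioo 0 x) := by
        exact (hcont.integrableOn_Icc).mono_set Ioo_subset_Icc_self
      have hnn : 0 ≤ᵐ[volume.restrict (Ioo (0:ℝ) x)] (fun y : ℝ => y - x*y/(x+y)) := by
        refine (ae_restrict_iff' measurableSet_Ioo).2 ?_
        filter_upwards with y hy
        have hxy : 0 < x + y := by linarith [hy.1]
        rw [Pi.zero_apply, sub_nonneg, div_le_iff₀ hxy]
        nlinarith [hy.1.le]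
      rw [← ofReal_integral_eq_lintegral_ofReal hintg hnn, inner_int hx0]
      exact (indicator_of_mem (mem_Ioo.mpr ⟨hx0, hx1⟩)
        (fun x : ℝ => ENNReal.ofReal (x^2 * Real.log 2 - x^2/2))).symm
    · rw [indicator_of_notMem hx]
      have key : ∀ y : ℝ, volume (Prod.mk y ⁻¹' (Prod.mk x ⁻¹' {p : ℝ × ℝ × ℝ |
          0 < p.2.2 ∧ p.2.2 < p.2.1 ∧ p.2.1 < p.1 ∧ p.1 < 1 ∧
          p.2.2 * (p.1 + p.2.1) > p.1 * p.2.1})) = 0 := by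
        intro y
        rw [hzset y, if_neg]
        · simp
        · rintro ⟨h1, h2, h3⟩
          exact hx ⟨h1.trans h2, h3⟩
      rw [lintegral_congr key]
      simp
  rw [lintegral_congr hslice, lintegral_indicator measurableSet_Ioo]
  have hintg : IntegrableOn (fun x : ℝ => x^2 * Real.log 2 - x^2/2) (Ioo 0 1) := by
    exact (Continuous.integrableOn_Icc (by continuity)).mono_set Ioo_subset_Icc_self
  have hnn : 0 ≤ᵐ[volume.restrict (Ioo (0:ℝ) 1)]
      (fun x : ℝ => x^2 * Real.log 2 - x^2/2) := by
    filter_upwards with x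
    have : 0 ≤ x^2 := sq_nonneg x
    rw [Pi.zero_apply]
    nlinarith
  rw [← ofReal_integral_eq_lintegral_ofReal hintg hnn]
  congr 1
  rw [← integral_Ioc_eq_integral_Ioo, ← intervalIntegral.integral_of_le zero_le_one]
  have hd : ∀ x ∈ Set.uIcc (0:ℝ) 1,
      HasDerivAt (fun t : ℝ => t^3/3 * Real.log 2 - t^3/6) (x^2 * Real.log 2 - x^2/2) x := by
    intro x _
    have h1 : HasDerivAt (fun t : ℝ => t^3) (3*x^2) x := by
      simpa using hasDerivAt_pow 3 x
    have h2 := ((h1.div_const 3).mul_const (Real.log 2)).sub (h1.div_const 6)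
    exact h2.congr_deriv (by ring)
  have hint : IntervalIntegrable (fun x : ℝ => x^2 * Real.log 2 - x^2/2) volume 0 1 := by
    apply Continuous.intervalIntegrable
    continuity
  rw [intervalIntegral.integral_eq_sub_of_hasDerivAt hd hint]
  ring
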